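/- Let T be a tree rooted at r such that r is not α-critical in T, let b be a child of r having some sibling b' that is α-critical in T_{b'}, and let S ⊆ V(T_b) satisfy α(T_b) > α(T_b - S). Then α(T) > α(T - S). -/
import Mathlib


open SimpleGraph

/-- The maximum size of an independent set of `G` contained in the vertex set `A`
(i.e. the independence number of the induced subgraph `G[A]`). -/
noncomputable def alphaOn {V : Type*} [Fintype V] (G : SimpleGraph V) (A : Set V) : ℕ :=
  sSup {n | ∃ s : Finset V, ↑s ⊆ A ∧ (↑s : Set V).Pairwise (fun a b => ¬ G.Adj a b) ∧ s.card = n}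

/-- The open neighborhood of a set of vertices. -/
def nbhd {V : Type*} (G : SimpleGraph V) (S : Set V) : Set V :=
  {v | v ∉ S ∧ ∃ u ∈ S, G.Adj u v}

/-- `v` is α-critical in the induced subgraph `G[A]`. -/
def critOn {V : Type*} [Fintype V] (G : SimpleGraph V) (A : Set V) (v : V) : Prop :=
  alphaOn G A = 1 + alphaOn G (A \ {v})

/-- For a tree `T` rooted at `r`, the vertex set of the subtree rooted at `a`:
those vertices reachable from `a` without passing through `r`. -/
def descend {V : Type*} (T : SimpleGraph V) (r a : V) : Set V :=
  {v | ∃ p : T.Walk a v, r ∉ p.support}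

/-- The connected component of `v₀` in `G - X`: vertices reachable from `v₀` avoiding `X`. -/
def avoidComp {V : Type*} (G : SimpleGraph V) (X : Set V) (v₀ : V) : Set V :=
  {v | ∃ p : G.Walk v₀ v, ∀ x ∈ p.support, x ∉ X}

section Aux
variable {V : Type*} [Fintype V] (G : SimpleGraph V)

lemma alphaOn_bddAbove (A : Set V) : BddAbove {n | ∃ s : Finset V, ↑s ⊆ A ∧ (↑s : Set V).Pairwise (fun a b => ¬ G.Adj a b) ∧ s.card = n} :=
  ⟨Fintype.card V, by rintro n ⟨s, -, -, rfl⟩; simpa using s.card_le_univ⟩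

lemma le_alphaOn {A : Set V} {s : Finset V} (hsA : ↑s ⊆ A)
    (hind : (↑s : Set V).Pairwise (fun a b => ¬ G.Adj a b)) : s.card ≤ alphaOn G A :=
  le_csSup (alphaOn_bddAbove G A) ⟨s, hsA, hind, rfl⟩

lemma alphaOn_exists (A : Set V) : ∃ s : Finset V, ↑s ⊆ A ∧ (↑s : Set V).Pairwise (fun a b => ¬ G.Adj a b) ∧ s.card = alphaOn G A := by
  have h0 : 0 ∈ {n | ∃ s : Finset V, ↑s ⊆ A ∧ (↑s : Set V).Pairwise (fun a b => ¬ G.Adj a b) ∧ s.card = n} :=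
    ⟨∅, by simp, by simp, rfl⟩
  exact Nat.sSup_mem ⟨0, h0⟩ (alphaOn_bddAbove G A)

lemma alphaOn_mono {A B : Set V} (hAB : A ⊆ B) : alphaOn G A ≤ alphaOn G B := by
  obtain ⟨s, hsA, hind, hcard⟩ := alphaOn_exists G A
  exact hcard ▸ le_alphaOn G (hsA.trans hAB) hind

lemma alphaOn_drop (A : Set V) (v : V) : alphaOn G A ≤ alphaOn G (A \ {v}) + 1 := by
  classical
  obtain ⟨s, hsA, hind, hcard⟩ := alphaOn_exists G A
  have h1 : ((s.erase v : Finset V) : Set V) ⊆ A \ {v} := by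
    intro x hx
    simp only [Finset.coe_erase, Set.mem_diff, Set.mem_singleton_iff] at hx ⊢
    exact ⟨hsA hx.1, hx.2⟩
  have h2 := le_alphaOn G h1 (hind.mono (by simp [Set.diff_subset]))
  by_cases hv : v ∈ s
  · rw [Finset.card_erase_of_mem hv] at h2; omega
  · rw [Finset.erase_eq_of_notMem hv] at h2; omega

lemma alphaOn_split_le (A B : Set V) : alphaOn G (A ∪ B) ≤ alphaOn G A + alphaOn G B := by
  classical
  obtain ⟨s, hs, hind, hcard⟩ := alphaOn_exists G (A ∪ B)
  have hsub1 : ((s.filter (· ∈ A) : Finset V) : Set V) ⊆ (↑s : Set V) := by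
    intro x hx; simp only [Finset.coe_filter, Set.mem_setOf_eq] at hx; exact hx.1
  have hsub2 : ((s.filter (· ∉ A) : Finset V) : Set V) ⊆ (↑s : Set V) := by
    intro x hx; simp only [Finset.coe_filter, Set.mem_setOf_eq] at hx; exact hx.1
  have h1 : ((s.filter (· ∈ A) : Finset V) : Set V) ⊆ A := by
    intro x hx; simp only [Finset.coe_filter, Set.mem_setOf_eq] at hx; exact hx.2
  have h2 : ((s.filter (· ∉ A) : Finset V) : Set V) ⊆ B := by
    intro x hx; simp only [Finset.coe_filter, Set.mem_setOf_eq] at hx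
    rcases hs hx.1 with h | h
    · exact absurd h hx.2
    · exact h
  have l1 := le_alphaOn G h1 (hind.mono hsub1)
  have l2 := le_alphaOn G h2 (hind.mono hsub2)
  have := Finset.card_filter_add_card_filter_not (s := s) (p := (· ∈ A))
  omega

lemma alphaOn_union_ge {A B : Set V} (hd : Disjoint A B)
    (hnoedge : ∀ a ∈ A, ∀ b ∈ B, ¬ G.Adj a b) :
    alphaOn G A + alphaOn G B ≤ alphaOn G (A ∪ B) := by
  classical
  obtain ⟨s, hsA, hindA, hcA⟩ := alphaOn_exists G A
  obtain ⟨t, htB, hindB, hcB⟩ := alphaOn_exists G B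
  have hdis : Disjoint s t := by
    rw [Finset.disjoint_left]
    intro x hxs hxt
    exact (hd.le_bot ⟨hsA hxs, htB hxt⟩ : x ∈ (⊥ : Set V)).elim
  have hsub : ((s ∪ t : Finset V) : Set V) ⊆ A ∪ B := by
    push_cast; exact Set.union_subset_union hsA htB
  have hind : ((s ∪ t : Finset V) : Set V).Pairwise (fun a b => ¬ G.Adj a b) := by
    intro x hx y hy hxy
    simp only [Finset.coe_union, Set.mem_union] at hx hy
    rcases hx with hx | hx <;> rcases hy with hy | hy
    · exact hindA hx hy hxy
    · exact hnoedge x (hsA hx) y (htB hy)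
    · exact fun hadj => hnoedge y (hsA hy) x (htB hx) hadj.symm
    · exact hindB hx hy hxy
  have := le_alphaOn G hsub hind
  rwa [Finset.card_union_of_disjoint hdis, hcA, hcB] at this

lemma alphaOn_union_eq {A B : Set V} (hd : Disjoint A B)
    (hnoedge : ∀ a ∈ A, ∀ b ∈ B, ¬ G.Adj a b) :
    alphaOn G (A ∪ B) = alphaOn G A + alphaOn G B :=
  le_antisymm (alphaOn_split_le G A B) (alphaOn_union_ge G hd hnoedge)

end Aux

section Struct
variable {V : Type*} {T : SimpleGraph V} {r a : V}

lemma descend_adj_eq_root {u v : V} (hu : u ∈ descend T r a) (hv : v ∉ descend T r a)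
    (h : T.Adj u v) : v = r := by
  by_contra hvr
  obtain ⟨p, hp⟩ := hu
  refine hv ⟨p.concat h, ?_⟩
  rw [SimpleGraph.Walk.support_concat]
  simp only [List.concat_eq_append, List.mem_append, List.mem_singleton]
  rintro (h1 | h2)
  · exact hp h1
  · exact hvr h2.symm

lemma root_notMem_descend : r ∉ descend T r a := by
  rintro ⟨p, hp⟩
  exact hp (SimpleGraph.Walk.end_mem_support p)

lemma mem_descend_self (h : T.Adj r a) : a ∈ descend T r a :=
  ⟨SimpleGraph.Walk.nil, by simp [h.ne]⟩

lemma descend_disjoint (hT : T.IsTree) {b b' : V} (hb : T.Adj r b) (hb' : T.Adj r b')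
    (hne : b ≠ b') : Disjoint (descend T r b) (descend T r b') := by
  classical
  rw [Set.disjoint_left]
  rintro v ⟨p, hp⟩ ⟨q, hq⟩
  have hw : r ∉ (p.append q.reverse).support := by
    rw [SimpleGraph.Walk.support_append]
    intro hmem
    rcases List.mem_append.mp hmem with h1 | h2
    · exact hp h1
    · have h3 := List.mem_of_mem_tail h2
      rw [SimpleGraph.Walk.support_reverse, List.mem_reverse] at h3
      exact hq h3
  set w := (p.append q.reverse).toPath with hwdef
  have hrw : r ∉ (w : T.Walk b b').support := fun hh =>
    hw (SimpleGraph.Walk.support_toPath_subset _ hh)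
  have hpath : (SimpleGraph.Walk.cons hb (w : T.Walk b b')).IsPath :=
    w.2.cons hrw
  have hedge : ¬ s(b', r) ∈ (SimpleGraph.Walk.cons hb (w : T.Walk b b')).edges := by
    rw [SimpleGraph.Walk.edges_cons]
    simp only [List.mem_cons]
    rintro (h1 | h2)
    · rw [Sym2.eq_iff] at h1
      rcases h1 with ⟨h1, h2⟩ | ⟨h1, h2⟩
      · exact hb'.ne' h1
      · exact hne h1.symm
    · exact hrw (SimpleGraph.Walk.snd_mem_support_of_mem_edges _ h2)
  have hcyc := SimpleGraph.Path.cons_isCycle ⟨_, hpath⟩ hb'.symm hedge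
  exact hT.IsAcyclic _ hcyc

end Struct

theorem stmt18 {V : Type*} [Fintype V] (T : SimpleGraph V) (hT : T.IsTree) (r : V)
    (hnc : ¬ critOn T Set.univ r) (b b' : V) (hb : T.Adj r b) (hb' : T.Adj r b')
    (hne : b ≠ b') (hcrit' : critOn T (descend T r b') b')
    (S : Set V) (hS : S ⊆ descend T r b)
    (h : alphaOn T (descend T r b \ S) < alphaOn T (descend T r b)) :
    alphaOn T Sᶜ < alphaOn T Set.univ := by
  set D := descend T r b with hDdef
  set D' := descend T r b' with hD'def
  have hrD : r ∉ D := root_notMem_descend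
  have hrD' : r ∉ D' := root_notMem_descend
  have hdisj : Disjoint D D' := descend_disjoint hT hb hb' hne
  -- no edges from D to the rest (other than to r)
  have hnoDE : ∀ u ∈ D, ∀ v ∈ Dᶜ \ {r}, ¬ T.Adj u v := by
    rintro u hu v ⟨hv1, hv2⟩ hadj
    exact hv2 (descend_adj_eq_root hu hv1 hadj)
  have hnoD'E : ∀ u ∈ D', ∀ v ∈ (Dᶜ \ {r}) \ D', ¬ T.Adj u v := by
    rintro u hu v ⟨⟨hv1, hv2⟩, hv3⟩ hadj
    exact hv2 (descend_adj_eq_root hu hv3 hadj)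
  -- r not critical
  have e0 : alphaOn T Set.univ = alphaOn T (Set.univ \ {r}) := by
    have h1 := alphaOn_drop T Set.univ r
    have h2 := alphaOn_mono T (Set.diff_subset : Set.univ \ {r} ⊆ Set.univ)
    unfold critOn at hnc
    omega
  -- decompose V \ {r} = D ∪ (Dᶜ \ {r})
  have hsplit1 : Set.univ \ {r} = D ∪ (Dᶜ \ {r}) := by
    ext v
    by_cases hv : v ∈ D
    · have : v ≠ r := fun hvr => hrD (hvr ▸ hv)
      simp [hv, this]
    · simp [hv]
  have e1 : alphaOn T (Set.univ \ {r}) = alphaOn T D + alphaOn T (Dᶜ \ {r}) := by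
    rw [hsplit1]
    exact alphaOn_union_eq T
      (Set.disjoint_left.mpr fun x hx ⟨hx1, _⟩ => hx1 hx) hnoDE
  -- decompose Dᶜ \ {r} = D' ∪ E
  have hD'sub : D' ⊆ Dᶜ \ {r} := by
    intro x hx
    exact ⟨fun hxD => Set.disjoint_left.mp hdisj hxD hx, fun hxr => hrD' (hxr ▸ hx)⟩
  have hsplit2 : Dᶜ \ {r} = D' ∪ ((Dᶜ \ {r}) \ D') := (Set.union_diff_cancel hD'sub).symm
  have e2 : alphaOn T (Dᶜ \ {r}) = alphaOn T D' + alphaOn T ((Dᶜ \ {r}) \ D') := by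
    conv_lhs => rw [hsplit2]
    exact alphaOn_union_eq T Set.disjoint_sdiff_right hnoD'E
  have ecrit : alphaOn T D' = 1 + alphaOn T (D' \ {b'}) := hcrit'
  -- a maximum independent set in Sᶜ
  obtain ⟨s, hsS, hind, hcard⟩ := alphaOn_exists T Sᶜ
  rw [← hcard]
  by_cases hr : r ∈ s
  · -- r ∈ s : use criticality of b'
    have hb's : b' ∉ s := by
      intro hmem
      exact hind (Finset.mem_coe.mpr hr) (Finset.mem_coe.mpr hmem) hb'.ne hb'
    have hcover : (↑s : Set V) ⊆ (D \ S) ∪ ((D' \ {b'}) ∪ (Dᶜ \ D')) := by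
      intro v hv
      have hvS : v ∉ S := hsS hv
      by_cases hvD : v ∈ D
      · exact Or.inl ⟨hvD, hvS⟩
      · by_cases hvD' : v ∈ D'
        · refine Or.inr (Or.inl ⟨hvD', ?_⟩)
          intro hvb'
          exact hb's (by rwa [Set.mem_singleton_iff.mp hvb'] at hv)
        · exact Or.inr (Or.inr ⟨hvD, hvD'⟩)
    have hc1 : s.card ≤ alphaOn T ((D \ S) ∪ ((D' \ {b'}) ∪ (Dᶜ \ D'))) :=
      le_alphaOn T hcover hind
    have hc2 := alphaOn_split_le T (D \ S) ((D' \ {b'}) ∪ (Dᶜ \ D'))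
    have hc3 := alphaOn_split_le T (D' \ {b'}) (Dᶜ \ D')
    have hdropE : alphaOn T (Dᶜ \ D') ≤ alphaOn T ((Dᶜ \ {r}) \ D') + 1 := by
      have heq : (Dᶜ \ D') \ {r} = (Dᶜ \ {r}) \ D' := by
        ext v; constructor
        · rintro ⟨⟨h1, h2⟩, h3⟩; exact ⟨⟨h1, h3⟩, h2⟩
        · rintro ⟨⟨h1, h3⟩, h2⟩; exact ⟨⟨h1, h2⟩, h3⟩
      have := alphaOn_drop T (Dᶜ \ D') r
      rwa [heq] at this
    omega
  · -- r ∉ s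
    have hcover : (↑s : Set V) ⊆ (D \ S) ∪ (Dᶜ \ {r}) := by
      intro v hv
      have hvS : v ∉ S := hsS hv
      by_cases hvD : v ∈ D
      · exact Or.inl ⟨hvD, hvS⟩
      · refine Or.inr ⟨hvD, ?_⟩
        intro hvr
        exact hr (by rwa [Set.mem_singleton_iff.mp hvr] at hv)
    have hc1 : s.card ≤ alphaOn T ((D \ S) ∪ (Dᶜ \ {r})) := le_alphaOn T hcover hind
    have hc2 := alphaOn_split_le T (D \ S) (Dᶜ \ {r})
    omega
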